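/- arXiv:1910.09674 — 4 statements merged into one kernel-verified Lean document; each statement's English description precedes it below -/
import Mathlib

section
/- Let n ≥ 2 be an integer and let m_{p,q} = ((n-1)(n+p+q-1)/(pq)) C(n+p-2,p-1) C(n+q-2,q-1) for p ≥ 1, and m_{0,q} = C(n+q-1,q). Then the double series Σ_{q=1}^∞ Σ_{p=0}^∞ m_{p,q} / (2q(p+n-1))^r converges for a real number r if and only if r > n. -/
/-- The multiplicity `m_{p,q} = dim H_{p,q}(S^{2n-1})` as a real number. -/
noncomputable def mult (n p q : ℕ) : ℝ :=
  if p = 0 then (Nat.choose (n + q - 1) q : ℝ)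
  else ((n : ℝ) - 1) * ((n : ℝ) + p + q - 1) / (p * q) *
    (Nat.choose (n + p - 2) (p - 1)) * (Nat.choose (n + q - 2) (q - 1))

/-- The general term `m_{p,q} / (2q(p+n-1))^r` of the Schatten series, indexed by
`p ≥ 0` and `q ≥ 1` (so `x = (p, q-1)`). -/
noncomputable def schattenTerm (n : ℕ) (r : ℝ) (x : ℕ × ℕ) : ℝ :=
  mult n x.1 (x.2 + 1) / (2 * ((x.2 : ℝ) + 1) * ((x.1 : ℝ) + n - 1)) ^ r

lemma summable_succ_rpow {s : ℝ} : (Summable fun k : ℕ => ((k:ℝ)+1) ^ s) ↔ s < -1 := by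
  have h : (fun k : ℕ => ((k:ℝ)+1)^s) = fun k => ((fun m : ℕ => (m:ℝ)^s) (k+1)) := by
    funext k; push_cast; ring_nf
  rw [h, summable_nat_add_iff (f := fun m : ℕ => (m:ℝ)^s) 1, Real.summable_nat_rpow]

lemma rpow_nat_sub {x a : ℝ} (hx : 0 < x) (m : ℕ) :
    x ^ (((m:ℝ)) - a) = x ^ m / x ^ a := by
  rw [Real.rpow_sub hx, Real.rpow_natCast]

lemma mult_nonneg (n p q : ℕ) (hn : 2 ≤ n) : 0 ≤ mult n p q := by
  have hN : (2:ℝ) ≤ n := by exact_mod_cast hn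
  unfold mult
  split
  · positivity
  · have hp : 1 ≤ p := Nat.one_le_iff_ne_zero.mpr ‹_›
    have hP : (1:ℝ) ≤ p := by exact_mod_cast hp
    have h1 : (0:ℝ) ≤ ((n : ℝ) - 1) * ((n : ℝ) + p + q - 1) / (p * q) := by
      apply div_nonneg
      · apply mul_nonneg <;> nlinarith [Nat.cast_nonneg (α := ℝ) q]
      · positivity
    positivity

lemma mult_le (n p q : ℕ) (hn : 2 ≤ n) (hq : 1 ≤ q) :
    mult n p q ≤ 2*(n:ℝ)^2 * ((n:ℝ)+p)^(n-1) * ((n:ℝ)+q)^(n-1) := by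
  have hN : (2:ℝ) ≤ n := by exact_mod_cast hn
  have hQ : (1:ℝ) ≤ q := by exact_mod_cast hq
  unfold mult
  split
  · subst ‹p = 0›
    have e1 : Nat.choose (n + q - 1) q = Nat.choose (n + q - 1) (n-1) := by
      have := Nat.choose_symm (n := n + q - 1) (k := q) (by omega)
      rw [show n + q - 1 - q = n - 1 by omega] at this; exact this.symm
    have e2 : (Nat.choose (n + q - 1) (n-1) : ℝ) ≤ ((n:ℝ)+q)^(n-1) := by
      calc (Nat.choose (n + q - 1) (n-1) : ℝ) ≤ ((n + q - 1 : ℕ) : ℝ)^(n-1) := by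
            exact_mod_cast Nat.choose_le_pow _ _
        _ ≤ ((n:ℝ)+q)^(n-1) := by
            apply pow_le_pow_left₀ (by positivity)
            have : ((n + q - 1 : ℕ) : ℝ) ≤ ((n + q : ℕ) : ℝ) := by exact_mod_cast Nat.sub_le _ _
            push_cast at this ⊢
            linarith
    rw [e1]
    push_cast
    calc (Nat.choose (n + q - 1) (n-1) : ℝ) ≤ ((n:ℝ)+q)^(n-1) := e2
      _ ≤ 2*(n:ℝ)^2 * ((n:ℝ)+0)^(n-1) * ((n:ℝ)+q)^(n-1) := by
          apply le_mul_of_one_le_left (by positivity)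
          have h1 : (1:ℝ) ≤ (n:ℝ)+0 := by linarith
          have h2 : (1:ℝ) ≤ ((n:ℝ)+0)^(n-1) := one_le_pow₀ h1
          nlinarith
  · have hp : 1 ≤ p := Nat.one_le_iff_ne_zero.mpr ‹_›
    have hP : (1:ℝ) ≤ p := by exact_mod_cast hp
    have h1 : (Nat.choose (n + p - 2) (p-1) : ℝ) ≤ ((n:ℝ)+p)^(n-1) := by
      have e1 : Nat.choose (n + p - 2) (p-1) = Nat.choose (n + p - 2) (n-1) := by
        have := Nat.choose_symm (n := n + p - 2) (k := p - 1) (by omega)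
        rw [show n + p - 2 - (p-1) = n - 1 by omega] at this; exact this.symm
      rw [e1]
      calc (Nat.choose (n + p - 2) (n-1) : ℝ) ≤ ((n + p - 2 : ℕ) : ℝ)^(n-1) := by
            exact_mod_cast Nat.choose_le_pow _ _
        _ ≤ ((n:ℝ)+p)^(n-1) := by
            apply pow_le_pow_left₀ (by positivity)
            have : (n + p - 2 : ℕ) ≤ n + p := by omega
            have := (Nat.cast_le (α := ℝ)).mpr this
            push_cast at this ⊢
            linarith
    have h2 : (Nat.choose (n + q - 2) (q-1) : ℝ) ≤ ((n:ℝ)+q)^(n-1) := by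
      have e1 : Nat.choose (n + q - 2) (q-1) = Nat.choose (n + q - 2) (n-1) := by
        have := Nat.choose_symm (n := n + q - 2) (k := q - 1) (by omega)
        rw [show n + q - 2 - (q-1) = n - 1 by omega] at this; exact this.symm
      rw [e1]
      calc (Nat.choose (n + q - 2) (n-1) : ℝ) ≤ ((n + q - 2 : ℕ) : ℝ)^(n-1) := by
            exact_mod_cast Nat.choose_le_pow _ _
        _ ≤ ((n:ℝ)+q)^(n-1) := by
            apply pow_le_pow_left₀ (by positivity)
            have : (n + q - 2 : ℕ) ≤ n + q := by omega
            have := (Nat.cast_le (α := ℝ)).mpr this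
            push_cast at this ⊢
            linarith
    have h3 : ((n:ℝ) - 1) * ((n:ℝ) + p + q - 1) / ((p:ℝ) * q) ≤ 2*(n:ℝ)^2 := by
      rw [div_le_iff₀ (by positivity)]
      have hNP : (n:ℝ)+p-1 ≤ (n:ℝ)*p := by nlinarith
      have hq1 : (1:ℝ) ≤ (n:ℝ)*p := by nlinarith
      have h5 : (n:ℝ)+p+q-1 ≤ 2*((n:ℝ)*p)*q := by nlinarith
      nlinarith [mul_le_mul (show (n:ℝ)-1 ≤ (n:ℝ) by linarith) h5 (by nlinarith) (by linarith)]
    have hs0 : (0:ℝ) ≤ ((n:ℝ) - 1) * ((n:ℝ) + p + q - 1) / ((p:ℝ) * q) := by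
      apply div_nonneg
      · apply mul_nonneg <;> nlinarith
      · positivity
    calc ((n:ℝ) - 1) * ((n:ℝ) + p + q - 1) / ((p:ℝ) * q) *
          (Nat.choose (n + p - 2) (p-1) : ℝ) * (Nat.choose (n + q - 2) (q-1) : ℝ)
        ≤ 2*(n:ℝ)^2 * ((n:ℝ)+p)^(n-1) * ((n:ℝ)+q)^(n-1) := by
          gcongr <;> positivity

theorem schatten_summable_iff (n : ℕ) (hn : 2 ≤ n) (r : ℝ) :
    Summable (schattenTerm n r) ↔ (n : ℝ) < r := by
  have hN : (2:ℝ) ≤ (n:ℝ) := by exact_mod_cast hn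
  have hN1 : (0:ℝ) < (n:ℝ) - 1 := by linarith
  have hcast : ((n - 1 : ℕ) : ℝ) = (n:ℝ) - 1 := by
    rw [Nat.cast_sub (by omega)]; norm_num
  have hsub : ∀ k : ℕ, ((k:ℝ)+1) ^ (((n:ℝ) - 1) - r)
      = ((k:ℝ)+1)^(n-1) / ((k:ℝ)+1)^r := by
    intro k
    rw [← hcast, rpow_nat_sub (by positivity)]
  constructor
  · intro h
    have hinj : Function.Injective (fun q : ℕ => ((0, q) : ℕ × ℕ)) := by
      intro a b hab; simpa using hab
    have h0 := h.comp_injective hinj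
    have f1 : (0:ℝ) < (Nat.factorial (n-1) : ℝ) := by exact_mod_cast Nat.factorial_pos _
    have f2 : (0:ℝ) < (2:ℝ)^r := Real.rpow_pos_of_pos two_pos r
    have f3 : (0:ℝ) < ((n:ℝ)-1)^r := Real.rpow_pos_of_pos hN1 r
    set c : ℝ := ((Nat.factorial (n-1) : ℝ))⁻¹ * ((2:ℝ)^r)⁻¹ * (((n:ℝ)-1)^r)⁻¹ with hc
    have hc0 : 0 < c := by positivity
    have key : ∀ q : ℕ, c * ((q:ℝ)+1) ^ (((n:ℝ) - 1) - r) ≤ schattenTerm n r (0, q) := by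
      intro q
      have e1 : Nat.choose (n + (q+1) - 1) (q+1) = Nat.choose (n+q) (n-1) := by
        rw [show n + (q+1) - 1 = n + q by omega]
        have := Nat.choose_symm (n := n + q) (k := q + 1) (by omega)
        rw [show n + q - (q+1) = n - 1 by omega] at this; exact this.symm
      have e2 : (((q:ℝ)+1)^(n-1)) / (Nat.factorial (n-1) : ℝ)
          ≤ (Nat.choose (n+q) (n-1) : ℝ) := by
        have h2 := Nat.pow_le_choose (α := ℝ) (n-1) (n+q)
        rw [show n + q + 1 - (n-1) = q + 2 by omega] at h2
        refine le_trans ?_ h2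
        gcongr
        push_cast
        linarith
      have hQ0 : (0:ℝ) < (q:ℝ) + 1 := by positivity
      have fQ : (0:ℝ) < ((q:ℝ)+1)^r := Real.rpow_pos_of_pos hQ0 r
      have hD : (2 * ((q:ℝ)+1) * (((0:ℕ):ℝ) + n - 1)) ^ r
          = (2:ℝ)^r * ((q:ℝ)+1)^r * ((n:ℝ)-1)^r := by
        rw [show ((0:ℕ):ℝ) + n - 1 = (n:ℝ) - 1 by push_cast; ring,
          Real.mul_rpow (by positivity) (by linarith),
          Real.mul_rpow (by norm_num) (by positivity)]
      have hmult : (((q:ℝ)+1)^(n-1)) / (Nat.factorial (n-1) : ℝ) ≤ mult n 0 (q+1) := by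
        rw [mult, if_pos rfl, e1]; exact e2
      show c * ((q:ℝ)+1) ^ (((n:ℝ) - 1) - r)
          ≤ mult n 0 (q+1) / (2 * ((q:ℝ)+1) * (((0:ℕ):ℝ) + n - 1)) ^ r
      rw [hD, hsub q]
      calc c * (((q:ℝ)+1)^(n-1) / ((q:ℝ)+1)^r)
          = ((((q:ℝ)+1)^(n-1)) / (Nat.factorial (n-1) : ℝ))
            / ((2:ℝ)^r * ((q:ℝ)+1)^r * ((n:ℝ)-1)^r) := by
            rw [hc]; field_simp
        _ ≤ mult n 0 (q+1) / ((2:ℝ)^r * ((q:ℝ)+1)^r * ((n:ℝ)-1)^r) := by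
            exact (div_le_div_iff_of_pos_right (mul_pos (mul_pos f2 fQ) f3)).mpr hmult
    have hsum : Summable (fun q : ℕ => c * ((q:ℝ)+1) ^ (((n:ℝ) - 1) - r)) :=
      Summable.of_nonneg_of_le
        (fun q => mul_nonneg hc0.le (Real.rpow_pos_of_pos (by positivity) _).le) key h0
    have hsum2 : Summable (fun q : ℕ => ((q:ℝ)+1) ^ (((n:ℝ) - 1) - r)) :=
      (summable_mul_left_iff hc0.ne').mp hsum
    have := summable_succ_rpow.mp hsum2
    linarith
  · intro hr
    have hr0 : (0:ℝ) ≤ r := by linarith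
    have hss : ((n:ℝ) - 1) - r < -1 := by linarith
    have hf : Summable (fun k : ℕ => ((k:ℝ)+1) ^ (((n:ℝ) - 1) - r)) :=
      summable_succ_rpow.mpr hss
    have hfg := hf.mul_of_nonneg hf (fun k => by positivity) (fun k => by positivity)
    set C : ℝ := 2*(n:ℝ)^2 * (n:ℝ)^(n-1) * (2*(n:ℝ))^(n-1) * ((2:ℝ)^r)⁻¹ with hC
    refine Summable.of_nonneg_of_le ?_ ?_ (hfg.mul_left C)
    · intro x
      apply div_nonneg (mult_nonneg n x.1 (x.2+1) hn)
      apply Real.rpow_nonneg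
      have h1 : (0:ℝ) ≤ (x.1:ℝ) := Nat.cast_nonneg _
      have h2 : (0:ℝ) ≤ (x.2:ℝ) := Nat.cast_nonneg _
      nlinarith
    · intro x
      obtain ⟨p, m⟩ := x
      have hQ0 : (0:ℝ) < (m:ℝ) + 1 := by positivity
      have hP1 : (1:ℝ) ≤ (p:ℝ) + n - 1 := by
        have : (0:ℝ) ≤ (p:ℝ) := by positivity
        linarith
      have hP0 : (0:ℝ) < (p:ℝ) + n - 1 := by linarith
      have hD : (2 * ((m:ℝ)+1) * ((p:ℝ) + n - 1)) ^ r
          = (2:ℝ)^r * ((m:ℝ)+1)^r * ((p:ℝ) + n - 1)^r := by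
        rw [Real.mul_rpow (by positivity) (by linarith),
          Real.mul_rpow (by norm_num) (by positivity)]
      have h8 : ((p:ℝ)+1)^r ≤ ((p:ℝ) + n - 1)^r :=
        Real.rpow_le_rpow (by positivity) (by linarith) hr0
      have hmult : mult n p (m+1)
          ≤ 2*(n:ℝ)^2 * ((n:ℝ)+p)^(n-1) * ((n:ℝ)+((m:ℝ)+1))^(n-1) := by
        have := mult_le n p (m+1) hn (by omega)
        convert this using 3
        push_cast; ring
      have h6 : ((n:ℝ)+p)^(n-1) ≤ (n:ℝ)^(n-1) * ((p:ℝ)+1)^(n-1) := by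
        rw [← mul_pow]
        apply pow_le_pow_left₀ (by positivity)
        nlinarith [Nat.cast_nonneg (α := ℝ) p]
      have h7 : ((n:ℝ)+((m:ℝ)+1))^(n-1) ≤ (2*(n:ℝ))^(n-1) * ((m:ℝ)+1)^(n-1) := by
        rw [← mul_pow]
        apply pow_le_pow_left₀ (by positivity)
        nlinarith
      have hnum : mult n p (m+1)
          ≤ 2*(n:ℝ)^2 * ((n:ℝ)^(n-1) * ((p:ℝ)+1)^(n-1)) * ((2*(n:ℝ))^(n-1) * ((m:ℝ)+1)^(n-1)) := by
        refine hmult.trans ?_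
        gcongr <;> positivity
      have fp2 : (0:ℝ) < ((p:ℝ)+1)^r := Real.rpow_pos_of_pos (by positivity) r
      have fm2 : (0:ℝ) < ((m:ℝ)+1)^r := Real.rpow_pos_of_pos hQ0 r
      have f2 : (0:ℝ) < (2:ℝ)^r := Real.rpow_pos_of_pos two_pos r
      have hden : (2:ℝ)^r * ((m:ℝ)+1)^r * ((p:ℝ)+1)^r
          ≤ (2 * ((m:ℝ)+1) * ((p:ℝ) + n - 1)) ^ r := by
        rw [hD]
        gcongr
      calc schattenTerm n r (p, m)
          = mult n p (m+1) / (2 * ((m:ℝ)+1) * ((p:ℝ) + n - 1)) ^ r := rfl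
        _ ≤ (2*(n:ℝ)^2 * ((n:ℝ)^(n-1) * ((p:ℝ)+1)^(n-1)) * ((2*(n:ℝ))^(n-1) * ((m:ℝ)+1)^(n-1)))
            / ((2:ℝ)^r * ((m:ℝ)+1)^r * ((p:ℝ)+1)^r) := by
            apply div_le_div₀ (by positivity) hnum (by positivity) hden
        _ = C * (((p:ℝ)+1) ^ (((n:ℝ) - 1) - r) * ((m:ℝ)+1) ^ (((n:ℝ) - 1) - r)) := by
            rw [hsub p, hsub m, hC]; field_simp
end

section
/- For every integer n ≥ 2 and real r with 1 ≤ r ≤ n, the double series Σ_{q=1}^∞ Σ_{p=0}^∞ m_{p,q} / (2q(p+n-1))^r diverges, where m_{p,q} is the dimension of H_{p,q}(S^{2n-1}). -/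
lemma key_nat (m k : ℕ) :
    (k + 1) ^ (m + 1) ≤ Nat.factorial (m + 1) * Nat.choose (m + k + 1) k := by
  have h1 : Nat.choose (m + k + 1) k = Nat.choose (m + k + 1) (m + 1) := by
    rw [← Nat.choose_symm (by omega : k ≤ m + k + 1)]
    congr 1
    omega
  rw [h1, ← Nat.descFactorial_eq_factorial_mul_choose]
  have h := Nat.pow_sub_le_descFactorial (m + k + 1) (m + 1)
  have h2 : m + k + 1 + 1 - (m + 1) = k + 1 := by omega
  rwa [h2] at h

theorem schatten_not_summable_of_le (n : ℕ) (hn : 2 ≤ n) (r : ℝ)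
    (hr1 : 1 ≤ r) (hrn : r ≤ (n : ℝ)) :
    ¬ Summable (schattenTerm n r) := by
  obtain ⟨m, rfl⟩ := Nat.exists_eq_add_of_le hn
  intro h
  have hinj : Function.Injective (fun k : ℕ => ((k + 1, 0) : ℕ × ℕ)) := by
    intro a b hab; simpa using hab
  have h1 : Summable (fun k : ℕ => schattenTerm (2 + m) r (k + 1, 0)) :=
    h.comp_injective hinj
  set F : ℝ := (Nat.factorial (m + 1) : ℝ) with hF
  set P : ℝ := (2 * ((m : ℝ) + 2)) ^ (m + 2) with hP
  have hFpos : 0 < F := by rw [hF]; positivity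
  have hPpos : 0 < P := by rw [hP]; positivity
  set c : ℝ := ((m : ℝ) + 1) / (F * P) with hc
  have hcpos : 0 < c := by rw [hc]; positivity
  have hlb : ∀ k : ℕ, c * (1 / ((k : ℝ) + 1)) ≤ schattenTerm (2 + m) r (k + 1, 0) := by
    intro k
    have hk1 : (0 : ℝ) < (k : ℝ) + 1 := by positivity
    set C1 : ℝ := (Nat.choose (m + k + 1) k : ℝ) with hC1def
    have hC1pos : 0 < C1 := by
      rw [hC1def]
      exact_mod_cast Nat.choose_pos (by omega)
    -- compute mult
    have hmult : mult (2 + m) (k + 1) 1 =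
        ((m : ℝ) + 1) * ((m : ℝ) + (k : ℝ) + 3) / ((k : ℝ) + 1) * C1 := by
      rw [mult, if_neg (Nat.succ_ne_zero k)]
      have e1 : 2 + m + (k + 1) - 2 = m + k + 1 := by omega
      have e2 : (k + 1) - 1 = k := by omega
      have e3 : 2 + m + 1 - 2 = m + 1 := by omega
      rw [e1, e2, e3, Nat.choose_zero_right, hC1def]
      push_cast
      ring
    -- compute the denominator base
    have hbase : 2 * (((0 : ℕ) : ℝ) + 1) * (((k + 1 : ℕ) : ℝ) + ((2 + m : ℕ) : ℝ) - 1) =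
        2 * ((k : ℝ) + (m : ℝ) + 2) := by push_cast; ring
    have hterm : schattenTerm (2 + m) r (k + 1, 0) =
        (((m : ℝ) + 1) * ((m : ℝ) + (k : ℝ) + 3) / ((k : ℝ) + 1) * C1) /
          (2 * ((k : ℝ) + (m : ℝ) + 2)) ^ r := by
      rw [schattenTerm]
      simp only
      rw [hbase, hmult]
    rw [hterm]
    -- bounds
    have hD1 : (1 : ℝ) ≤ 2 * ((k : ℝ) + (m : ℝ) + 2) := by
      have : (0:ℝ) ≤ (k:ℝ) := Nat.cast_nonneg k
      have : (0:ℝ) ≤ (m:ℝ) := Nat.cast_nonneg m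
      linarith [Nat.cast_nonneg (α := ℝ) k]
    have hDrpos : (0 : ℝ) < (2 * ((k : ℝ) + (m : ℝ) + 2)) ^ r :=
      Real.rpow_pos_of_pos (by linarith) r
    have hrn' : r ≤ ((2 + m : ℕ) : ℝ) := hrn
    have hDr : (2 * ((k : ℝ) + (m : ℝ) + 2)) ^ r ≤ P * ((k : ℝ) + 1) ^ (m + 2) := by
      calc (2 * ((k : ℝ) + (m : ℝ) + 2)) ^ r
          ≤ (2 * ((k : ℝ) + (m : ℝ) + 2)) ^ (((2 + m : ℕ) : ℝ)) :=
            Real.rpow_le_rpow_of_exponent_le hD1 hrn'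
        _ = (2 * ((k : ℝ) + (m : ℝ) + 2)) ^ ((2 + m : ℕ)) := Real.rpow_natCast _ _
        _ ≤ (2 * ((m : ℝ) + 2) * ((k : ℝ) + 1)) ^ ((2 + m : ℕ)) := by
            apply pow_le_pow_left₀ (by linarith)
            nlinarith [Nat.cast_nonneg (α := ℝ) k, Nat.cast_nonneg (α := ℝ) m]
        _ = P * ((k : ℝ) + 1) ^ (m + 2) := by
            rw [hP, mul_pow]
            congr 1
            · congr 1; omega
            · congr 1; omega
    -- numerator bound
    have hch : ((k : ℝ) + 1) ^ (m + 1) ≤ F * C1 := by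
      have := key_nat m k
      have h' : (((k + 1) ^ (m + 1) : ℕ) : ℝ) ≤
          ((Nat.factorial (m + 1) * Nat.choose (m + k + 1) k : ℕ) : ℝ) := Nat.cast_le.mpr this
      push_cast at h'
      rw [hF, hC1def]
      exact_mod_cast h'
    have hnum : ((m : ℝ) + 1) * ((k : ℝ) + 1) ^ (m + 1) / F ≤
        ((m : ℝ) + 1) * ((m : ℝ) + (k : ℝ) + 3) / ((k : ℝ) + 1) * C1 := by
      rw [div_le_iff₀ hFpos] at *
      have hstep : ((k : ℝ) + 1) ^ (m + 1) * ((k : ℝ) + 1) ≤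
          (F * C1) * ((m : ℝ) + (k : ℝ) + 3) := by
        apply mul_le_mul hch (by nlinarith [Nat.cast_nonneg (α := ℝ) m]) (by positivity)
        positivity
      rw [div_mul_eq_mul_div, div_mul_eq_mul_div, le_div_iff₀ hk1]
      nlinarith [Nat.cast_nonneg (α := ℝ) m, hstep]
    -- combine
    calc c * (1 / ((k : ℝ) + 1))
        = (((m : ℝ) + 1) * ((k : ℝ) + 1) ^ (m + 1) / F) / (P * ((k : ℝ) + 1) ^ (m + 2)) := by
          rw [hc]
          field_simp
          ring
      _ ≤ (((m : ℝ) + 1) * ((m : ℝ) + (k : ℝ) + 3) / ((k : ℝ) + 1) * C1) /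
            (P * ((k : ℝ) + 1) ^ (m + 2)) := by
          apply div_le_div_of_nonneg_right hnum (by positivity)
      _ ≤ (((m : ℝ) + 1) * ((m : ℝ) + (k : ℝ) + 3) / ((k : ℝ) + 1) * C1) /
            (2 * ((k : ℝ) + (m : ℝ) + 2)) ^ r := by
          apply div_le_div_of_nonneg_left _ hDrpos hDr
          positivity
  -- contradiction with the harmonic series
  have h2 : Summable (fun k : ℕ => c * (1 / ((k : ℝ) + 1))) :=
    Summable.of_nonneg_of_le (fun k => by positivity) hlb h1
  have h3 : Summable (fun k : ℕ => 1 / ((k : ℝ) + 1)) := by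
    have := h2.mul_left c⁻¹
    simpa [mul_assoc, inv_mul_cancel₀ hcpos.ne', one_mul, ← mul_assoc] using this
  have h4 : Summable (fun k : ℕ => 1 / ((k + 1 : ℕ) : ℝ)) := by
    simpa using h3
  exact Real.not_summable_one_div_natCast ((summable_nat_add_iff 1).mp h4)
end

section
/- For every integer n ≥ 3 and every integer k ≥ 1, (k(k+2n-2)+1)/(4(k+n-2)²) ≤ (K(K+2n-2)+1)/(4(K+n-2)²) where K = n²-3n+1, with equality if and only if k = K. -/
/-!
Substituting `y = x + n - 2` and `c = n² - 2n - 1` turns the ratio into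
`(y² + 2y - c) / (4y²) = 1/4 + 1/(2y) - c/(4y²)`, a concave quadratic in `1/y` that peaks at
`y = c`, i.e. at `x = n² - 3n + 1`; the deficit from the peak is the square `(y - c)² / (4cy²)`.
-/

section Peak

variable {y c : ℝ}

theorem peak_sub_ratio (hy : y ≠ 0) (hc : c ≠ 0) :
    (c + 1) / (4 * c) - (y ^ 2 + 2 * y - c) / (4 * y ^ 2) = (y - c) ^ 2 / (4 * c * y ^ 2) := by
  field_simp
  ring

theorem ratio_le_peak (hy : y ≠ 0) (hc : 0 < c) :
    (y ^ 2 + 2 * y - c) / (4 * y ^ 2) ≤ (c + 1) / (4 * c) := by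
  have hsub := peak_sub_ratio hy hc.ne'
  have : 0 ≤ (y - c) ^ 2 / (4 * c * y ^ 2) := by positivity
  linarith

theorem ratio_eq_peak_iff (hy : y ≠ 0) (hc : 0 < c) :
    (y ^ 2 + 2 * y - c) / (4 * y ^ 2) = (c + 1) / (4 * c) ↔ y = c := by
  rw [eq_comm, ← sub_eq_zero, peak_sub_ratio hy hc.ne', div_eq_zero_iff, sq_eq_zero_iff,
    sub_eq_zero, or_iff_left (by positivity)]

end Peak

/-- `(1 + μ(k)) / λ_min(k)²` for `μ(k) = k(k + 2n - 2)` and `λ_min(k) = 2(k + n - 2)`. -/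
noncomputable def kohnRatio (n x : ℝ) : ℝ :=
  (x * (x + 2 * n - 2) + 1) / (4 * (x + n - 2) ^ 2)

section KohnRatio

variable {n x : ℝ}

theorem kohnRatio_eq (n x : ℝ) :
    kohnRatio n x = ((x + n - 2) ^ 2 + 2 * (x + n - 2) - (n ^ 2 - 2 * n - 1)) /
      (4 * (x + n - 2) ^ 2) := by
  unfold kohnRatio
  ring

theorem kohnRatio_critical (n : ℝ) :
    kohnRatio n (n ^ 2 - 3 * n + 1) = (n ^ 2 - 2 * n - 1 + 1) / (4 * (n ^ 2 - 2 * n - 1)) := by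
  rw [kohnRatio_eq, show n ^ 2 - 3 * n + 1 + n - 2 = n ^ 2 - 2 * n - 1 by ring]
  field_simp
  ring

theorem kohnRatio_le_critical (hx : x + n - 2 ≠ 0) (hc : 0 < n ^ 2 - 2 * n - 1) :
    kohnRatio n x ≤ kohnRatio n (n ^ 2 - 3 * n + 1) := by
  rw [kohnRatio_critical, kohnRatio_eq]
  exact ratio_le_peak hx hc

theorem kohnRatio_eq_critical_iff (hx : x + n - 2 ≠ 0) (hc : 0 < n ^ 2 - 2 * n - 1) :
    kohnRatio n x = kohnRatio n (n ^ 2 - 3 * n + 1) ↔ x = n ^ 2 - 3 * n + 1 := by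
  rw [kohnRatio_critical, kohnRatio_eq, ratio_eq_peak_iff hx hc]
  constructor <;> intro h <;> linarith

end KohnRatio

theorem ratio_le_max_general (n : ℕ) (hn : 3 ≤ n) (k : ℕ) :
    (((k : ℝ) * ((k : ℝ) + 2 * n - 2) + 1) / (4 * ((k : ℝ) + n - 2) ^ 2) ≤
        (((n ^ 2 - 3 * n + 1 : ℕ) : ℝ) * (((n ^ 2 - 3 * n + 1 : ℕ) : ℝ) + 2 * n - 2) + 1) /
          (4 * (((n ^ 2 - 3 * n + 1 : ℕ) : ℝ) + n - 2) ^ 2)) ∧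
    (((k : ℝ) * ((k : ℝ) + 2 * n - 2) + 1) / (4 * ((k : ℝ) + n - 2) ^ 2) =
        (((n ^ 2 - 3 * n + 1 : ℕ) : ℝ) * (((n ^ 2 - 3 * n + 1 : ℕ) : ℝ) + 2 * n - 2) + 1) /
          (4 * (((n ^ 2 - 3 * n + 1 : ℕ) : ℝ) + n - 2) ^ 2) ↔
      k = n ^ 2 - 3 * n + 1) := by
  have hn' : (3 : ℝ) ≤ n := by exact_mod_cast hn
  have hK : ((n ^ 2 - 3 * n + 1 : ℕ) : ℝ) = (n : ℝ) ^ 2 - 3 * n + 1 := by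
    rw [Nat.cast_add, Nat.cast_sub (by nlinarith)]
    push_cast
    ring
  have hx : (k : ℝ) + n - 2 ≠ 0 := by linarith [(k.cast_nonneg : (0 : ℝ) ≤ k)]
  have hc : (0 : ℝ) < (n : ℝ) ^ 2 - 2 * n - 1 := by nlinarith
  change kohnRatio n k ≤ kohnRatio n _ ∧ (kohnRatio n k = kohnRatio n _ ↔ _)
  rw [hK]
  refine ⟨kohnRatio_le_critical hx hc, (kohnRatio_eq_critical_iff hx hc).trans ?_⟩
  rw [← hK, Nat.cast_inj]

theorem ratio_le_max (n : ℕ) (hn : 3 ≤ n) (k : ℕ) (hk : 1 ≤ k) :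
    (((k : ℝ) * ((k : ℝ) + 2 * n - 2) + 1) / (4 * ((k : ℝ) + n - 2) ^ 2) ≤
        (((n ^ 2 - 3 * n + 1 : ℕ) : ℝ) * (((n ^ 2 - 3 * n + 1 : ℕ) : ℝ) + 2 * n - 2) + 1) /
          (4 * (((n ^ 2 - 3 * n + 1 : ℕ) : ℝ) + n - 2) ^ 2)) ∧
    (((k : ℝ) * ((k : ℝ) + 2 * n - 2) + 1) / (4 * ((k : ℝ) + n - 2) ^ 2) =
        (((n ^ 2 - 3 * n + 1 : ℕ) : ℝ) * (((n ^ 2 - 3 * n + 1 : ℕ) : ℝ) + 2 * n - 2) + 1) /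
          (4 * (((n ^ 2 - 3 * n + 1 : ℕ) : ℝ) + n - 2) ^ 2) ↔
      k = n ^ 2 - 3 * n + 1) :=
  ratio_le_max_general n hn k
end

section
/- For n = 2, for all f ∈ L²(S³) in the orthogonal complement of ker □_b whose spherical harmonic expansion is supported on eigenspaces H_{p,q}(S³) with q ≥ 1, one has Σ_{p,q} |c_{p,q}|² (1 + (p+q)(p+q+2)) / (2q(p+1))² ≤ Σ_{p,q} |c_{p,q}|², with equality if and only if the expansion is supported on H_{0,1}(S³). -/
theorem green_sobolev_sphere_three (c : ℕ × ℕ → ℂ)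
    (hsupp : ∀ p : ℕ, c (p, 0) = 0)
    (hsum : Summable fun x : ℕ × ℕ => ‖c x‖ ^ 2) :
    Summable (fun x : ℕ × ℕ =>
      ‖c x‖ ^ 2 * (1 + ((x.1 : ℝ) + x.2) * ((x.1 : ℝ) + x.2 + 2)) /
        (2 * (x.2 : ℝ) * ((x.1 : ℝ) + 1)) ^ 2) ∧
    (∑' x : ℕ × ℕ,
        ‖c x‖ ^ 2 * (1 + ((x.1 : ℝ) + x.2) * ((x.1 : ℝ) + x.2 + 2)) /
          (2 * (x.2 : ℝ) * ((x.1 : ℝ) + 1)) ^ 2) ≤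
      ∑' x : ℕ × ℕ, ‖c x‖ ^ 2 ∧
    ((∑' x : ℕ × ℕ,
        ‖c x‖ ^ 2 * (1 + ((x.1 : ℝ) + x.2) * ((x.1 : ℝ) + x.2 + 2)) /
          (2 * (x.2 : ℝ) * ((x.1 : ℝ) + 1)) ^ 2) =
        ∑' x : ℕ × ℕ, ‖c x‖ ^ 2 ↔
      ∀ x : ℕ × ℕ, x ≠ (0, 1) → c x = 0) := by
  set g : ℕ × ℕ → ℝ := fun x =>
    ‖c x‖ ^ 2 * (1 + ((x.1 : ℝ) + x.2) * ((x.1 : ℝ) + x.2 + 2)) /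
      (2 * (x.2 : ℝ) * ((x.1 : ℝ) + 1)) ^ 2 with hg
  have hg0 : ∀ x, 0 ≤ g x := by
    rintro ⟨p, q⟩
    have hp : (0:ℝ) ≤ p := Nat.cast_nonneg p
    have hq : (0:ℝ) ≤ q := Nat.cast_nonneg q
    have hN : (0:ℝ) ≤ 1 + ((p:ℝ) + q) * ((p:ℝ) + q + 2) := by nlinarith
    exact div_nonneg (mul_nonneg (by positivity) hN) (sq_nonneg _)
  have hpt : ∀ x, g x ≤ ‖c x‖ ^ 2 := by
    rintro ⟨p, q⟩
    rcases Nat.eq_zero_or_pos q with h0 | hq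
    · subst h0
      simp [hg, hsupp p]
    · have hq1 : (1:ℝ) ≤ q := by exact_mod_cast hq
      have hp : (0:ℝ) ≤ p := Nat.cast_nonneg p
      have hD : (0:ℝ) < (2 * (q:ℝ) * ((p:ℝ) + 1)) ^ 2 := by positivity
      rw [hg]
      simp only
      rw [div_le_iff₀ hD]
      have hND : 1 + ((p:ℝ) + q) * ((p:ℝ) + q + 2) ≤ (2 * (q:ℝ) * ((p:ℝ) + 1)) ^ 2 := by
        nlinarith [mul_nonneg hp (sub_nonneg.2 hq1), sq_nonneg ((p:ℝ) + q + 1)]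
      nlinarith [sq_nonneg ‖c (p, q)‖]
  have hgsum : Summable g := Summable.of_nonneg_of_le hg0 hpt hsum
  have hle : ∑' x, g x ≤ ∑' x : ℕ × ℕ, ‖c x‖ ^ 2 := Summable.tsum_le_tsum hpt hgsum hsum
  refine ⟨hgsum, hle, ?_, ?_⟩
  · intro heq
    by_contra hcon
    push_neg at hcon
    obtain ⟨⟨p, q⟩, hx, hc⟩ := hcon
    rcases Nat.eq_zero_or_pos q with h0 | hq
    · exact hc (h0 ▸ hsupp p)
    have hq1 : (1:ℝ) ≤ q := by exact_mod_cast hq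
    have hp : (0:ℝ) ≤ p := Nat.cast_nonneg p
    have hD : (0:ℝ) < (2 * (q:ℝ) * ((p:ℝ) + 1)) ^ 2 := by positivity
    have hcpos : 0 < ‖c (p, q)‖ ^ 2 := pow_pos (norm_pos_iff.2 hc) 2
    have hpq : p ≠ 0 ∨ q ≠ 1 := by
      by_contra h
      push_neg at h
      exact hx (by simp [h.1, h.2])
    have hNlt : 1 + ((p:ℝ) + q) * ((p:ℝ) + q + 2) < (2 * (q:ℝ) * ((p:ℝ) + 1)) ^ 2 := by
      rcases hpq with hp1 | hq2
      · have : (1:ℝ) ≤ p := by exact_mod_cast Nat.one_le_iff_ne_zero.2 hp1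
        nlinarith [mul_nonneg hp (sub_nonneg.2 hq1)]
      · have : (2:ℝ) ≤ q := by
          have : 2 ≤ q := by omega
          exact_mod_cast this
        nlinarith [mul_nonneg hp (sub_nonneg.2 hq1)]
    have hstrict : g (p, q) < ‖c (p, q)‖ ^ 2 := by
      rw [hg]
      simp only
      rw [div_lt_iff₀ hD]
      nlinarith
    exact ne_of_lt (Summable.tsum_lt_tsum hpt hstrict hgsum hsum) heq
  · intro h
    refine tsum_congr fun x => ?_
    by_cases hx : x = (0, 1)
    · subst hx
      norm_num
    · simp [h x hx]
end
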